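/- In the six-box model with 11 draws, for any fixed outcome sequence s of the first 10 draws containing exactly 5 Whites and 5 Blacks, the conditional probability that the eleventh draw is White, given that the first 10 draws equal s, is exactly 1/2 — the same as the unconditional probability that the first draw is White. (This follows from the symmetry i ↔ 5−i of the box compositions.) -/
import Mathlib


/-- Mass function of the joint distribution of (box, sequence of `n` draws) in the
six-box model: box `i` (with white-ball proportion `i/5`) is chosen with probability
`1/6`, and conditionally on it the draws are i.i.d. Bernoulli with parameter `i/5`. -/
noncomputable def sixBoxMass (n : ℕ) (z : Fin 6 × (Fin n → Bool)) : ℝ :=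
  (1 / 6) * ∏ k : Fin n,
    (if z.2 k then (z.1 : ℝ) / 5 else 1 - (z.1 : ℝ) / 5)

open Classical in
/-- Probability of an event `A` under the joint distribution of (box, `n` draws). -/
noncomputable def sixBoxP (n : ℕ) (A : Fin 6 × (Fin n → Bool) → Prop) : ℝ :=
  ∑ z : Fin 6 × (Fin n → Bool), if A z then sixBoxMass n z else 0

/-- Conditional probability `P(A | B) = P(A ∩ B) / P(B)` in the six-box model. -/
noncomputable def sixBoxCond (n : ℕ) (A B : Fin 6 × (Fin n → Bool) → Prop) : ℝ :=
  sixBoxP n (fun z => A z ∧ B z) / sixBoxP n B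

/-- With 11 draws, for any fixed sequence `s` of the first 10 outcomes containing
exactly 5 Whites and 5 Blacks, the conditional probability that the eleventh draw
is White, given that the first 10 draws equal `s`, is exactly `1/2` — the same as
the unconditional probability that the first draw is White. -/
theorem sixBox_eleventh_white_given_five_whites_five_blacks (s : Fin 10 → Bool)
    (hW : (Finset.univ.filter fun k => s k = true).card = 5)
    (hB : (Finset.univ.filter fun k => s k = false).card = 5) :
    sixBoxCond 11 (fun z => z.2 10 = true)
        (fun z => ∀ k : Fin 10, z.2 (Fin.castLE (by norm_num) k) = s k) = 1 / 2 ∧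
    sixBoxP 1 (fun z => z.2 0 = true) = 1 / 2 := by
  classical
  have hprod : ∀ p : ℝ, ∏ k : Fin 10, (if s k then p else 1 - p) = p ^ 5 * (1 - p) ^ 5 := by
    intro p
    rw [Finset.prod_ite, Finset.prod_const, Finset.prod_const]
    congr 1
    · rw [show (Finset.univ.filter fun k => s k) = Finset.univ.filter fun k => s k = true by
        simp, hW]
    · rw [show (Finset.univ.filter fun k => ¬ s k) = Finset.univ.filter fun k => s k = false by
        simp, hB]
  have hcast : ∀ k : Fin 10, (Fin.castLE (by norm_num : (10:ℕ) ≤ 11) k) = Fin.castSucc k :=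
    fun k => rfl
  have hlast : (10 : Fin 11) = Fin.last 10 := rfl
  have main : ∀ (i : Fin 6) (Q : (Fin 11 → Bool) → Prop) [DecidablePred Q],
      (∑ t : Fin 11 → Bool,
        if Q t ∧ (∀ k : Fin 10, t (Fin.castSucc k) = s k) then sixBoxMass 11 (i, t) else 0)
      = ∑ b : Bool, if Q (Fin.snoc s b) then sixBoxMass 11 (i, Fin.snoc s b) else 0 := by
    intro i Q _
    rw [← Equiv.sum_comp (Fin.snocEquiv (fun _ => Bool)), Fintype.sum_prod_type]
    have : ∀ (b : Bool) (u : Fin 10 → Bool),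
        (Fin.snocEquiv (fun _ => Bool)) (b, u) = Fin.snoc u b := fun b u => rfl
    simp only [this, Fin.snoc_castSucc]
    have h2 : ∀ b : Bool, (∑ u : Fin 10 → Bool,
        if Q (Fin.snoc u b) ∧ (∀ k : Fin 10, u k = s k) then
          sixBoxMass 11 (i, Fin.snoc u b) else 0)
        = if Q (Fin.snoc s b) then sixBoxMass 11 (i, Fin.snoc s b) else 0 := by
      intro b
      rw [Finset.sum_eq_single_of_mem s (Finset.mem_univ s)
        (fun u _ hu => if_neg (fun h => hu (funext h.2)))]
      simp
    rw [Fintype.sum_congr _ _ h2]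
  have hmass : ∀ (i : Fin 6) (b : Bool), sixBoxMass 11 (i, Fin.snoc s b)
      = (1/6) * (((i:ℝ)/5)^5 * (1 - (i:ℝ)/5)^5) *
        (if b then (i:ℝ)/5 else 1 - (i:ℝ)/5) := by
    intro i b
    rw [sixBoxMass]
    rw [Fin.prod_univ_castSucc]
    simp only [Fin.snoc_castSucc, Fin.snoc_last]
    rw [hprod, ← mul_assoc]
  have hPB : sixBoxP 11 (fun z => ∀ k : Fin 10, z.2 (Fin.castLE (by norm_num) k) = s k)
      = ∑ i : Fin 6, (1/6) * (((i:ℝ)/5)^5 * (1 - (i:ℝ)/5)^5) := by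
    rw [sixBoxP, Fintype.sum_prod_type]
    refine Fintype.sum_congr _ _ fun i => ?_
    simp only [hcast]
    have := main i (fun _ => True)
    simp only [true_and, if_true] at this
    rw [this, Fintype.sum_bool]
    simp only [hmass, if_true]
    simp only [Bool.false_eq_true, if_false]
    ring
  have hPAB : sixBoxP 11 (fun z => z.2 10 = true ∧
        ∀ k : Fin 10, z.2 (Fin.castLE (by norm_num) k) = s k)
      = ∑ i : Fin 6, (1/6) * (((i:ℝ)/5)^5 * (1 - (i:ℝ)/5)^5) * ((i:ℝ)/5) := by
    rw [sixBoxP, Fintype.sum_prod_type]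
    refine Fintype.sum_congr _ _ fun i => ?_
    simp only [hcast, hlast]
    have := main i (fun t => t (Fin.last 10) = true)
    simp only [Fin.snoc_last] at this
    rw [this, Fintype.sum_bool]
    simp [hmass]
  constructor
  · rw [sixBoxCond, hPAB, hPB, Fin.sum_univ_six, Fin.sum_univ_six]
    norm_num [show ((3:Fin 6):ℕ)=3 from rfl, show ((4:Fin 6):ℕ)=4 from rfl,
      show ((5:Fin 6):ℕ)=5 from rfl]
  · rw [sixBoxP,
      ← Equiv.sum_comp ((Equiv.refl (Fin 6)).prodCongr (Equiv.funUnique (Fin 1) Bool).symm)]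
    simp only [Fintype.sum_prod_type, Fintype.sum_bool, Equiv.prodCongr_apply, Equiv.coe_refl,
      Prod.map, Equiv.funUnique, Equiv.coe_fn_symm_mk, id_eq, sixBoxMass]
    simp
    rw [Fin.sum_univ_six]
    norm_num [show ((3:Fin 6):ℕ)=3 from rfl, show ((4:Fin 6):ℕ)=4 from rfl,
      show ((5:Fin 6):ℕ)=5 from rfl]
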